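/- arXiv:2506.13341 — 3 statements merged into one kernel-verified Lean document; each statement's English description precedes it below -/
import Mathlib

section
/- Under the reduction setup, the total derivative Df(z*) of f := (f¹, f²) with respect to all arguments (a, b, λ) has rank n if and only if the total derivative Df̄(a*, λ*) of the reduced map with respect to (a, λ) has rank ñ. -/
/-- The rank of a continuous linear map between real normed spaces: the dimension of
its range. -/
noncomputable def clmRank {E F : Type*} [NormedAddCommGroup E] [NormedSpace ℝ E]
    [NormedAddCommGroup F] [NormedSpace ℝ F] (T : E →L[ℝ] F) : ℕ :=
  Module.finrank ℝ (LinearMap.range T.toLinearMap)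

/-- **Equivalence of full-rank conditions for the total derivatives.**
Under the reduction setup (implicit-function reduction of `f = (f¹, f²)` along the
invertible partial derivative `D_b f²(z*)`, with `n = p + q` and `ñ = p`), the total
derivative `Df(z*)` with respect to all arguments `(a, b, λ)` has rank `n` if and only
if the total derivative `Df̄(a*, λ*)` of the reduced map
`f̄(a, λ) = f¹(a, φ(a, λ), λ)` with respect to `(a, λ)` has rank `ñ`. -/
theorem rank_total_deriv_iff_rank_reduced {p q m : ℕ}
    (f1 : (Fin p → ℝ) → (Fin q → ℝ) → (Fin m → ℝ) → (Fin p → ℝ))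
    (f2 : (Fin p → ℝ) → (Fin q → ℝ) → (Fin m → ℝ) → (Fin q → ℝ))
    (hf1 : ContDiff ℝ 1 (fun z : (Fin p → ℝ) × (Fin q → ℝ) × (Fin m → ℝ) =>
      f1 z.1 z.2.1 z.2.2))
    (hf2 : ContDiff ℝ 1 (fun z : (Fin p → ℝ) × (Fin q → ℝ) × (Fin m → ℝ) =>
      f2 z.1 z.2.1 z.2.2))
    (as : Fin p → ℝ) (bs : Fin q → ℝ) (ls : Fin m → ℝ)
    (hzero : f2 as bs ls = 0)
    -- invertibility of the partial derivative `D_b f²(z*)`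
    (E : (Fin q → ℝ) ≃L[ℝ] (Fin q → ℝ))
    (hE : (E : (Fin q → ℝ) →L[ℝ] (Fin q → ℝ)) = fderiv ℝ (fun b => f2 as b ls) bs)
    -- the implicit function `φ` on an open neighborhood `U` of `(a*, λ*)`
    (U : Set ((Fin p → ℝ) × (Fin m → ℝ))) (hU : IsOpen U) (hmemU : (as, ls) ∈ U)
    (φ : (Fin p → ℝ) → (Fin m → ℝ) → (Fin q → ℝ))
    (hφ : ContDiffOn ℝ 1 (fun w : (Fin p → ℝ) × (Fin m → ℝ) => φ w.1 w.2) U)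
    (hφs : φ as ls = bs)
    (hφf2 : ∀ w ∈ U, f2 w.1 (φ w.1 w.2) w.2 = 0) :
    clmRank (fderiv ℝ (fun z : (Fin p → ℝ) × (Fin q → ℝ) × (Fin m → ℝ) =>
        (f1 z.1 z.2.1 z.2.2, f2 z.1 z.2.1 z.2.2)) (as, bs, ls)) = p + q
    ↔ clmRank (fderiv ℝ (fun w : (Fin p → ℝ) × (Fin m → ℝ) =>
        f1 w.1 (φ w.1 w.2) w.2) (as, ls)) = p := by
  classical
  set Z := (Fin p → ℝ) × (Fin q → ℝ) × (Fin m → ℝ)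
  set W := (Fin p → ℝ) × (Fin m → ℝ)
  have hf1' : DifferentiableAt ℝ (fun z : Z => f1 z.1 z.2.1 z.2.2) (as, bs, ls) :=
    (hf1.differentiable one_ne_zero).differentiableAt
  have hf2' : DifferentiableAt ℝ (fun z : Z => f2 z.1 z.2.1 z.2.2) (as, bs, ls) :=
    (hf2.differentiable one_ne_zero).differentiableAt
  set A := fderiv ℝ (fun z : Z => f1 z.1 z.2.1 z.2.2) (as, bs, ls) with hA
  set B := fderiv ℝ (fun z : Z => f2 z.1 z.2.1 z.2.2) (as, bs, ls) with hB
  have hAder : HasFDerivAt (fun z : Z => f1 z.1 z.2.1 z.2.2) A (as, bs, ls) :=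
    hf1'.hasFDerivAt
  have hBder : HasFDerivAt (fun z : Z => f2 z.1 z.2.1 z.2.2) B (as, bs, ls) :=
    hf2'.hasFDerivAt
  -- total derivative of the pair
  have hDF : fderiv ℝ (fun z : Z => (f1 z.1 z.2.1 z.2.2, f2 z.1 z.2.1 z.2.2)) (as, bs, ls)
      = A.prod B := (HasFDerivAt.prodMk hAder hBder).fderiv
  -- derivative of φ
  have hφdiff : DifferentiableAt ℝ (fun w : W => φ w.1 w.2) (as, ls) :=
    (hφ.contDiffAt (hU.mem_nhds hmemU)).differentiableAt one_ne_zero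
  set P := fderiv ℝ (fun w : W => φ w.1 w.2) (as, ls) with hPdef
  have hPder : HasFDerivAt (fun w : W => φ w.1 w.2) P (as, ls) := hφdiff.hasFDerivAt
  -- the graph map G and its derivative Ψ
  set Ψ : W →L[ℝ] Z :=
    (ContinuousLinearMap.fst ℝ (Fin p → ℝ) (Fin m → ℝ)).prod
      (P.prod (ContinuousLinearMap.snd ℝ (Fin p → ℝ) (Fin m → ℝ))) with hΨ
  have hGder : HasFDerivAt (fun w : W => ((w.1, φ w.1 w.2, w.2) : Z)) Ψ (as, ls) :=
    HasFDerivAt.prodMk (hasFDerivAt_fst) (HasFDerivAt.prodMk hPder hasFDerivAt_snd)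
  have hGval : ((as, φ as ls, ls) : Z) = (as, bs, ls) := by rw [hφs]
  -- derivative of the reduced map
  have hredder : HasFDerivAt (fun w : W => f1 w.1 (φ w.1 w.2) w.2) (A.comp Ψ) (as, ls) := by
    have := (hGval ▸ hAder).comp (as, ls) hGder
    exact this
  have hDred : fderiv ℝ (fun w : W => f1 w.1 (φ w.1 w.2) w.2) (as, ls) = A.comp Ψ :=
    hredder.fderiv
  -- B ∘ Ψ = 0
  have hBΨder : HasFDerivAt (fun w : W => f2 w.1 (φ w.1 w.2) w.2) (B.comp Ψ) (as, ls) := by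
    have := (hGval ▸ hBder).comp (as, ls) hGder
    exact this
  have hBΨ : B.comp Ψ = 0 := by
    have hev : (fun w : W => f2 w.1 (φ w.1 w.2) w.2) =ᶠ[nhds (as, ls)]
        (fun _ => (0 : Fin q → ℝ)) := by
      filter_upwards [hU.mem_nhds hmemU] with w hw
      exact hφf2 w hw
    have h1 : B.comp Ψ = fderiv ℝ (fun _ : W => (0 : Fin q → ℝ)) (as, ls) :=
      hBΨder.fderiv.symm.trans hev.fderiv_eq
    rw [fderiv_const_apply] at h1
    exact h1
  -- B on the b-slot is E
  have hBE : ∀ k : Fin q → ℝ, B ((0 : Fin p → ℝ), k, (0 : Fin m → ℝ)) = E k := by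
    intro k
    set J : (Fin q → ℝ) →L[ℝ] Z :=
      (0 : (Fin q → ℝ) →L[ℝ] (Fin p → ℝ)).prod
        ((ContinuousLinearMap.id ℝ (Fin q → ℝ)).prod 0) with hJ
    have hjder : HasFDerivAt (fun b : Fin q → ℝ => ((as, b, ls) : Z)) J bs :=
      HasFDerivAt.prodMk (hasFDerivAt_const as bs) (HasFDerivAt.prodMk (hasFDerivAt_id bs) (hasFDerivAt_const ls bs))
    have hcomp : HasFDerivAt (fun b => f2 as b ls) (B.comp J) bs := by
      have := hBder.comp bs hjder
      exact this
    have hBJ : B.comp J = (E : (Fin q → ℝ) →L[ℝ] (Fin q → ℝ)) := by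
      rw [hE]; exact hcomp.fderiv.symm
    have hk : J k = ((0 : Fin p → ℝ), k, (0 : Fin m → ℝ)) := rfl
    calc B ((0 : Fin p → ℝ), k, (0 : Fin m → ℝ)) = (B.comp J) k := by rw [← hk]; rfl
      _ = E k := by rw [hBJ]; rfl
  -- key surjectivity equivalence
  have key : Function.Surjective (A.prod B) ↔ Function.Surjective (A.comp Ψ) := by
    constructor
    · intro hs u
      obtain ⟨z, hz⟩ := hs (u, 0)
      rw [ContinuousLinearMap.prod_apply, Prod.mk.injEq] at hz
      set x : W := (z.1, z.2.2) with hx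
      have hΨx : Ψ x = (z.1, P x, z.2.2) := rfl
      set d : Fin q → ℝ := z.2.1 - P x with hd
      have hdiff : z - Ψ x = ((0 : Fin p → ℝ), d, (0 : Fin m → ℝ)) := by
        have hzeta : z = (z.1, z.2.1, z.2.2) := rfl
        rw [hΨx, hd]
        conv_lhs => rw [hzeta]
        rw [Prod.mk_sub_mk, Prod.mk_sub_mk, sub_self, sub_self]
      have hEd : E d = 0 := by
        have : B (z - Ψ x) = 0 := by
          rw [map_sub, hz.2]
          have : B (Ψ x) = (B.comp Ψ) x := rfl
          rw [this, hBΨ]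
          simp
        rw [hdiff, hBE] at this
        exact this
      have hd0 : d = 0 := by
        have := E.injective (show E d = E 0 by simp [hEd])
        exact this
      have hzΨ : z = Ψ x := by
        have := sub_eq_zero.mp (show z - Ψ x = 0 by rw [hdiff, hd0]; rfl)
        exact this
      exact ⟨x, by rw [ContinuousLinearMap.comp_apply, ← hzΨ, hz.1]⟩
    · intro hs uv
      obtain ⟨u, v⟩ := uv
      set s : Z := ((0 : Fin p → ℝ), E.symm v, (0 : Fin m → ℝ)) with hsdef
      obtain ⟨x, hx⟩ := hs (u - A s)
      refine ⟨Ψ x + s, ?_⟩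
      rw [ContinuousLinearMap.prod_apply, map_add, map_add]
      have h1 : A (Ψ x) = u - A s := hx
      have h2 : B (Ψ x) = 0 := by
        have : B (Ψ x) = (B.comp Ψ) x := rfl
        rw [this, hBΨ]; simp
      have h3 : B s = v := by rw [hsdef, hBE]; simp
      rw [h1, h2, h3]
      simp
  -- rank = surjectivity translations
  have hrank1 : ∀ T : Z →L[ℝ] (Fin p → ℝ) × (Fin q → ℝ),
      clmRank T = p + q ↔ Function.Surjective T := by
    intro T
    rw [show Function.Surjective T ↔ Function.Surjective T.toLinearMap from Iff.rfl,
      ← LinearMap.range_eq_top]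
    unfold clmRank
    constructor
    · intro h
      apply Submodule.eq_top_of_finrank_eq
      rw [h]
      simp [Module.finrank_prod]
    · intro h
      rw [h, finrank_top]
      simp [Module.finrank_prod]
  have hrank2 : ∀ T : W →L[ℝ] (Fin p → ℝ),
      clmRank T = p ↔ Function.Surjective T := by
    intro T
    rw [show Function.Surjective T ↔ Function.Surjective T.toLinearMap from Iff.rfl,
      ← LinearMap.range_eq_top]
    unfold clmRank
    constructor
    · intro h
      apply Submodule.eq_top_of_finrank_eq
      rw [h]; simp
    · intro h
      rw [h, finrank_top]; simp
  rw [hDF, hDred, hrank1, hrank2]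
  exact key
end

section
/- Let f : ℝ^n × ℝ^m → ℝ^n be continuously differentiable, let σ* ∈ ℝ, and let x : ℝ → ℝ^n and λ : ℝ → ℝ^m be differentiable at σ* with f(x(σ), λ(σ)) = 0 for all σ in a neighborhood of σ*. Let w ∈ ℝ^n satisfy wᵀ · D_x f(x(σ*), λ(σ*)) = 0 (i.e., w is a left null vector of the state Jacobian at the point). Then wᵀ · D_λ f(x(σ*), λ(σ*)) · λ'(σ*) = 0; that is, the vector (D_λ f(x(σ*), λ(σ*)))ᵀ w is orthogonal to the tangent vector λ'(σ*) of the parameter curve. -/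
open Matrix

/-- **The normal-vector orthogonality relation.**
Let `f : ℝⁿ × ℝᵐ → ℝⁿ` be continuously differentiable, and let the curves `x(σ)`,
`λ(σ)` be differentiable at `σ*` (with derivatives `x'(σ*)` and `λ'(σ*)`), with
`f(x(σ), λ(σ)) = 0` for all `σ` in a neighborhood of `σ*`. If `w ∈ ℝⁿ` is a left null
vector of the state Jacobian, i.e. `wᵀ · D_x f(x(σ*), λ(σ*)) = 0`, then
`wᵀ · D_λ f(x(σ*), λ(σ*)) · λ'(σ*) = 0`: the vector `(D_λ f)ᵀ w` is orthogonal to the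
tangent vector `λ'(σ*)` of the parameter curve. -/
theorem normal_vector_orthogonal_to_tangent {n m : ℕ}
    (f : (Fin n → ℝ) × (Fin m → ℝ) → (Fin n → ℝ))
    (hf : ContDiff ℝ 1 f)
    (σs : ℝ) (x : ℝ → Fin n → ℝ) (l : ℝ → Fin m → ℝ)
    (xd : Fin n → ℝ) (ld : Fin m → ℝ)
    (hx : HasDerivAt x xd σs) (hl : HasDerivAt l ld σs)
    (hzero : ∀ᶠ σ in nhds σs, f (x σ, l σ) = 0)
    (w : Fin n → ℝ)
    (hw : ∀ u : Fin n → ℝ, w ⬝ᵥ fderiv ℝ (fun y => f (y, l σs)) (x σs) u = 0) :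
    w ⬝ᵥ fderiv ℝ (fun μ => f (x σs, μ)) (l σs) ld = 0 := by
  have hF : HasFDerivAt f (fderiv ℝ f (x σs, l σs)) (x σs, l σs) :=
    (hf.differentiable one_ne_zero (x σs, l σs)).hasFDerivAt
  set F := fderiv ℝ f (x σs, l σs) with hFdef
  -- partial derivatives
  have h1 : HasFDerivAt (fun y => f (y, l σs))
      (F.comp (ContinuousLinearMap.inl ℝ _ _)) (x σs) :=
    hF.comp (x σs) (hasFDerivAt_prodMk_left (x σs) (l σs))
  have h2 : HasFDerivAt (fun μ => f (x σs, μ))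
      (F.comp (ContinuousLinearMap.inr ℝ _ _)) (l σs) :=
    hF.comp (l σs) (hasFDerivAt_prodMk_right (x σs) (l σs))
  -- curve derivative
  have hcurve : HasDerivAt (fun σ => f (x σ, l σ)) (F (xd, ld)) σs := by
    have := hF.comp_hasDerivAt σs (hx.prodMk hl)
    exact this
  have hzero' : HasDerivAt (fun σ => f (x σ, l σ)) 0 σs := by
    have h0 : HasDerivAt (fun _ : ℝ => (0 : Fin n → ℝ)) 0 σs := hasDerivAt_const _ _
    exact h0.congr_of_eventuallyEq (hzero.mono fun σ h => h)
  have hFzero : F (xd, ld) = 0 := hcurve.unique hzero'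
  have hsplit : F (xd, ld) = F (xd, 0) + F (0, ld) := by
    rw [← map_add]; congr 1; simp
  have hwx : w ⬝ᵥ F (xd, 0) = 0 := by
    have := hw xd
    rwa [h1.fderiv] at this
  have key : w ⬝ᵥ F (0, ld) = 0 := by
    have : w ⬝ᵥ (F (xd, 0) + F (0, ld)) = 0 := by
      rw [← hsplit, hFzero]; simp
    rw [dotProduct_add, hwx, zero_add] at this
    exact this
  rw [h2.fderiv]
  exact key
end

section
/- Let g : ℝ^m → ℝ be differentiable, k ∈ ℝ^m a fixed direction, λ₀ ∈ ℝ^m, and Δ : ℝ^m → ℝ a function differentiable at λ₀ such that g(λ + Δ(λ)·k) = 0 for all λ in a neighborhood of λ₀. Let N := ∇g(λ₀ + Δ(λ₀)·k) and suppose kᵀN ≠ 0. Then ∇Δ(λ₀) = −(kᵀN)⁻¹ · N. -/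
open scoped RealInnerProductSpace

/-- **Gradient of the stability margin.**
Let `g : ℝᵐ → ℝ` be differentiable (its zero level set locally representing the
bifurcation hypersurface), `k ∈ ℝᵐ` a fixed direction, `l₀ ∈ ℝᵐ`, and `Δ : ℝᵐ → ℝ`
a margin function, differentiable at `l₀`, with `g(λ + Δ(λ)·k) = 0` for all `λ` in a
neighborhood of `l₀`. With the normal vector `N := ∇g(l₀ + Δ(l₀)·k)` and `kᵀN ≠ 0`,
the sensitivity of the margin is `∇Δ(l₀) = −(kᵀN)⁻¹ · N`. -/
theorem margin_sensitivity {m : ℕ}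
    (g : EuclideanSpace ℝ (Fin m) → ℝ) (hg : Differentiable ℝ g)
    (k l₀ : EuclideanSpace ℝ (Fin m))
    (Δ : EuclideanSpace ℝ (Fin m) → ℝ) (hΔ : DifferentiableAt ℝ Δ l₀)
    (hzero : ∀ᶠ l in nhds l₀, g (l + Δ l • k) = 0)
    (N : EuclideanSpace ℝ (Fin m)) (hN : N = gradient g (l₀ + Δ l₀ • k))
    (hkN : (inner ℝ k N : ℝ) ≠ 0) :
    gradient Δ l₀ = -((inner ℝ k N : ℝ))⁻¹ • N := by
  set p := l₀ + Δ l₀ • k with hp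
  -- derivative of the inner map φ : l ↦ l + Δ l • k
  have hφ : HasFDerivAt (fun l => l + Δ l • k)
      (ContinuousLinearMap.id ℝ _ + (fderiv ℝ Δ l₀).smulRight k) l₀ :=
    (hasFDerivAt_id l₀).add (hΔ.hasFDerivAt.smul_const k)
  have hcomp : HasFDerivAt (fun l => g (l + Δ l • k))
      ((fderiv ℝ g p).comp
        (ContinuousLinearMap.id ℝ _ + (fderiv ℝ Δ l₀).smulRight k)) l₀ :=
    ((hg p).hasFDerivAt).comp l₀ hφ
  have hzero' : HasFDerivAt (fun l => g (l + Δ l • k)) 0 l₀ :=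
    (hasFDerivAt_const (𝕜 := ℝ) (0:ℝ) l₀).congr_of_eventuallyEq
      (hzero : (fun l => g (l + Δ l • k)) =ᶠ[nhds l₀] fun _ => (0:ℝ))
  have hL : ((fderiv ℝ g p).comp
      (ContinuousLinearMap.id ℝ _ + (fderiv ℝ Δ l₀).smulRight k)) = 0 :=
    hcomp.unique hzero'
  -- translate fderivs into gradients
  have hgrad_g : ∀ v, fderiv ℝ g p v = ⟪N, v⟫ := by
    intro v
    rw [hN]
    have := ((hg p).hasGradientAt (x := p)).hasFDerivAt
    rw [this.fderiv]
    simp [InnerProductSpace.toDual_apply_apply]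
  have hgrad_Δ : ∀ v, fderiv ℝ Δ l₀ v = ⟪gradient Δ l₀, v⟫ := by
    intro v
    have := hΔ.hasGradientAt.hasFDerivAt
    rw [this.fderiv]
    simp [InnerProductSpace.toDual_apply_apply]
  have key : ∀ v : EuclideanSpace ℝ (Fin m),
      ⟪N, v⟫ + ⟪gradient Δ l₀, v⟫ * ⟪N, k⟫ = 0 := by
    intro v
    have := congrArg (fun (L : EuclideanSpace ℝ (Fin m) →L[ℝ] ℝ) => L v) hL
    simp only [ContinuousLinearMap.comp_apply, ContinuousLinearMap.add_apply,
      ContinuousLinearMap.id_apply, ContinuousLinearMap.smulRight_apply,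
      ContinuousLinearMap.zero_apply, map_add, map_smul, smul_eq_mul] at this
    rw [hgrad_g, hgrad_g, hgrad_Δ] at this
    linarith
  apply ext_inner_right ℝ
  intro v
  have h := key v
  have hNk : ⟪N, k⟫ = (inner ℝ k N : ℝ) := real_inner_comm k N
  rw [hNk] at h
  have h2 : ⟪gradient Δ l₀, v⟫ * (inner ℝ k N : ℝ) = -⟪N, v⟫ := by linarith
  have h3 := congrArg (· * ((inner ℝ k N : ℝ))⁻¹) h2
  simp only [mul_inv_cancel_right₀ hkN] at h3
  rw [h3, real_inner_smul_left]
  ring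
end
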